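/- (Theorem 1(iii), safety part.) Let b̃ be a fixed point of the binary Bellman operator T with associated safe set C = C(b̃), and let π be any policy such that for every s ∈ C and every action a, b̃(s, a) = 1 implies a ∉ π(s). Then trajectories under π starting in C never reach the failure set: for every s₀ ∈ C and every t ≥ 0, F_t^π(s₀) ∩ G = ∅. -/

import Mathlib

open scoped Classical

variable {S A : Type*}

/-- `reach F π t s` : the `t`-step reachable set from state `s` under policy `π`
(a policy assigns to each state the set of allowed actions).
`F_0^π(s) = {s}` and `F_{t+1}^π(s) = { F(s', a) : s' ∈ F_t^π(s), a ∈ π(s') }`. -/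
def reach (F : S → A → S) (π : S → Set A) : ℕ → S → Set S
  | 0, s => {s}
  | t + 1, s => {s'' | ∃ s' ∈ reach F π t s, ∃ a ∈ π s', s'' = F s' a}

/-- `reachSA F π t s a` : the `t`-step reachable set from the state-action pair `(s, a)`:
`F_0^π(s,a) = {s}`, `F_1^π(s,a) = {F(s,a)}`, and for `t ≥ 1`,
`F_{t+1}^π(s,a) = { F(s', a') : s' ∈ F_t^π(s,a), a' ∈ π(s') }`. -/
def reachSA (F : S → A → S) (π : S → Set A) : ℕ → S → A → Set S
  | 0, s, _ => {s}
  | 1, s, a => {F s a}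
  | t + 2, s, a => {s'' | ∃ s' ∈ reachSA F π (t + 1) s a, ∃ a' ∈ π s', s'' = F s' a'}

/-- The insecurity function: `i(s) = 1` if `s ∈ G`, else `0`. -/
noncomputable def insec (G : Set S) (s : S) : ℕ := if s ∈ G then 1 else 0

/-- The binary safety value function of a policy:
`v^π(s) = 1` iff some reachable state from `s` lies in `G`. -/
noncomputable def vPol (F : S → A → S) (G : Set S) (π : S → Set A) (s : S) : ℕ :=
  if ∃ t : ℕ, ∃ s' ∈ reach F π t s, s' ∈ G then 1 else 0

/-- The binary safety action-value function of a policy: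
`b^π(s,a) = 1` iff some reachable state from `(s,a)` lies in `G`. -/
noncomputable def bPol (F : S → A → S) (G : Set S) (π : S → Set A) (s : S) (a : A) : ℕ :=
  if ∃ t : ℕ, ∃ s' ∈ reachSA F π t s a, s' ∈ G then 1 else 0

/-- The optimal binary value function `v^*(s) = inf_π v^π(s)`,
the infimum over all (nonempty-support) policies. -/
noncomputable def vStar (F : S → A → S) (G : Set S) (s : S) : ℕ :=
  ⨅ π : {π : S → Set A // ∀ x, (π x).Nonempty}, vPol F G π.1 s

/-- The optimal binary action-value function `b^*(s,a) = inf_π b^π(s,a)`. -/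
noncomputable def bStar (F : S → A → S) (G : Set S) (s : S) (a : A) : ℕ :=
  ⨅ π : {π : S → Set A // ∀ x, (π x).Nonempty}, bPol F G π.1 s a

/-- The binary Bellman operator:
`(T b)(s,a) = i(s) + (1 − i(s)) · min_{a'} b(F(s,a), a')`. -/
noncomputable def Tb (F : S → A → S) (G : Set S) (b : S → A → ℕ) : S → A → ℕ :=
  fun s a => insec G s + (1 - insec G s) * ⨅ a' : A, b (F s a) a'

theorem reach_subset_of_mapsTo {F : S → A → S} {π : S → Set A} {C : Set S}
    (hC : ∀ s ∈ C, ∀ a ∈ π s, F s a ∈ C) {s : S} (hs : s ∈ C) :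
    ∀ t, reach F π t s ⊆ C
  | 0 => by simpa [reach] using hs
  | t + 1 => by
    rintro _ ⟨s', hs', a, ha, rfl⟩
    exact hC s' (reach_subset_of_mapsTo hC hs t hs') a ha

section Bellman

variable {F : S → A → S} {G : Set S} {b : S → A → ℕ}

theorem Tb_apply_of_mem {s : S} (hs : s ∈ G) (a : A) : Tb F G b s a = 1 := by
  simp [Tb, insec, hs]

theorem Tb_apply_of_notMem {s : S} (hs : s ∉ G) (a : A) :
    Tb F G b s a = ⨅ a' : A, b (F s a) a' := by
  simp [Tb, insec, hs]

def safeSet (b : S → A → ℕ) : Set S := {x | (⨅ a : A, b x a) = 0}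

theorem notMem_of_mem_safeSet [Nonempty A] (hfix : Tb F G b = b) {s : S}
    (hs : s ∈ safeSet b) : s ∉ G := by
  intro hsG
  have hone : ∀ a, b s a = 1 := fun a => hfix ▸ Tb_apply_of_mem hsG a
  have hinf : (⨅ a : A, b s a) = 1 := by simp only [hone, ciInf_const]
  exact one_ne_zero (hinf.symm.trans hs)

/-- Off `G` the fixed-point equation reads `b̃(s, a) = min_{a'} b̃(F(s, a), a')`. -/
theorem apply_mem_safeSet [Nonempty A] (hfix : Tb F G b = b) {s : S} (hs : s ∈ safeSet b)
    {a : A} (ha : b s a = 0) : F s a ∈ safeSet b := by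
  have hval := congrFun (congrFun hfix s) a
  rw [Tb_apply_of_notMem (notMem_of_mem_safeSet hfix hs)] at hval
  exact hval.trans ha

end Bellman

theorem safe_policy_safety_general [Nonempty A] (F : S → A → S) (G : Set S)
    (b : S → A → ℕ) (hb : ∀ s a, b s a = 0 ∨ b s a = 1) (hfix : Tb F G b = b)
    (π : S → Set A)
    (hsafe : ∀ s ∈ {x : S | (⨅ a : A, b x a) = 0}, ∀ a : A, b s a = 1 → a ∉ π s) :
    ∀ s₀ ∈ {x : S | (⨅ a : A, b x a) = 0}, ∀ t : ℕ,
      reach F π t s₀ ∩ G = ∅ := by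
  intro s₀ hs₀ t
  have hinv : ∀ s ∈ safeSet b, ∀ a ∈ π s, F s a ∈ safeSet b := by
    intro s hs a ha
    have hba : b s a = 0 := (hb s a).resolve_right fun h => hsafe s hs a h ha
    exact apply_mem_safeSet hfix hs hba
  refine Set.eq_empty_of_forall_notMem fun s ⟨hreach, hsG⟩ => ?_
  exact notMem_of_mem_safeSet hfix (reach_subset_of_mapsTo hinv hs₀ t hreach) hsG

/-- Theorem 1(iii), safety part: if `b̃` is a fixed point of `T`
and `π` is a policy that never takes an action `a` with `b̃(s, a) = 1` at states
`s ∈ C = C(b̃)`, then trajectories under `π` starting in `C` never reach `G`. -/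
theorem safe_policy_safety [Fintype A] [Nonempty A] (F : S → A → S) (G : Set S)
    (b : S → A → ℕ) (hb : ∀ s a, b s a = 0 ∨ b s a = 1) (hfix : Tb F G b = b)
    (π : S → Set A) (hπ : ∀ x, (π x).Nonempty)
    (hsafe : ∀ s ∈ {x : S | (⨅ a : A, b x a) = 0}, ∀ a : A, b s a = 1 → a ∉ π s) :
    ∀ s₀ ∈ {x : S | (⨅ a : A, b x a) = 0}, ∀ t : ℕ,
      reach F π t s₀ ∩ G = ∅ :=
  safe_policy_safety_general F G b hb hfix π hsafe
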